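/- arXiv:math/9909143 — 7 statements merged into one kernel-verified Lean document; each statement's English description precedes it below -/
import Mathlib

section
/- Let G be a topological group, E a noncompact locally profinite group, and Γ a cocompact lattice in G × E whose projection pr_G : Γ → G is injective. Then for every compact open subgroup S of E the double coset space S\E/Γ_E is finite, i.e. E is the union of finitely many sets of the form S e Γ_E. -/
noncomputable section

/-- A locally profinite group: a locally compact Hausdorff totally disconnected
topological group. -/
def IsLocallyProfinite (E : Type*) [TopologicalSpace E] : Prop :=
  LocallyCompactSpace E ∧ T2Space E ∧ TotallyDisconnectedSpace E

theorem exists_finset_eq_mul_mul_of_compactSpace_quotient {K : Type*} [Group K]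
    [TopologicalSpace K] [SeparatelyContinuousMul K] {Γ : Subgroup K} [CompactSpace (K ⧸ Γ)]
    {U : Set K} (hU : IsOpen U) (hU1 : (1 : K) ∈ U) :
    ∃ T : Finset K, ∀ k : K, ∃ t ∈ T, ∃ u ∈ U, ∃ γ ∈ Γ, k = u * t * γ := by
  let V : K → Set (K ⧸ Γ) := fun t => QuotientGroup.mk '' ((· * t⁻¹) ⁻¹' U)
  have hV : ∀ t, IsOpen (V t) := fun t =>
    QuotientGroup.isOpenMap_coe _ (hU.preimage (continuous_mul_const t⁻¹))
  have hcover : Set.univ ⊆ ⋃ t, V t := by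
    rintro q -
    obtain ⟨k, rfl⟩ := QuotientGroup.mk_surjective q
    exact Set.mem_iUnion.2 ⟨k, k, by simpa using hU1, rfl⟩
  obtain ⟨T, hT⟩ := isCompact_univ.elim_finite_subcover V hV hcover
  refine ⟨T, fun k => ?_⟩
  obtain ⟨t, ht, x, hxU, hx⟩ := Set.mem_iUnion₂.1 (hT (Set.mem_univ (k : K ⧸ Γ)))
  exact ⟨t, ht, x * t⁻¹, hxU, x⁻¹ * k, QuotientGroup.eq.1 hx, by group⟩

theorem double_coset_space_finite_general {G E : Type*}
    [Group G] [TopologicalSpace G] [IsTopologicalGroup G]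
    [Group E] [TopologicalSpace E] [IsTopologicalGroup E]
    (Γ : Subgroup (G × E))
    (hcpt : CompactSpace ((G × E) ⧸ Γ))
    (S : Subgroup E) (hSo : IsOpen (S : Set E)) :
    ∃ T : Finset E, ∀ e : E, ∃ t ∈ T, ∃ s ∈ S, ∃ γ ∈ Γ, e = s * t * (γ : G × E).2 := by
  classical
  obtain ⟨T, hT⟩ := exists_finset_eq_mul_mul_of_compactSpace_quotient (Γ := Γ)
    (isOpen_univ.prod hSo) ⟨Set.mem_univ 1, S.one_mem⟩
  refine ⟨T.image Prod.snd, fun e => ?_⟩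
  obtain ⟨t, ht, u, hu, γ, hγ, he⟩ := hT (1, e)
  exact ⟨t.2, Finset.mem_image_of_mem _ ht, u.2, hu.2, γ, hγ, congrArg Prod.snd he⟩

/-- If `Γ` is a cocompact lattice in `G × E` with injective projection to `G`,
where `G` is a topological group and `E` a noncompact locally profinite group, then for every
compact open subgroup `S` of `E` the double coset space `S\E/Γ_E` is finite: `E` is the union of
finitely many sets `S e Γ_E`. -/
theorem double_coset_space_finite {G E : Type*}
    [Group G] [TopologicalSpace G] [IsTopologicalGroup G]
    [Group E] [TopologicalSpace E] [IsTopologicalGroup E]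
    (hE : IsLocallyProfinite E) (hnc : NoncompactSpace E)
    (Γ : Subgroup (G × E)) (hdisc : DiscreteTopology Γ)
    (hcpt : CompactSpace ((G × E) ⧸ Γ))
    (hinj : Set.InjOn Prod.fst (Γ : Set (G × E)))
    (S : Subgroup E) (hSc : IsCompact (S : Set E)) (hSo : IsOpen (S : Set E)) :
    ∃ T : Finset E, ∀ e : E, ∃ t ∈ T, ∃ s ∈ S, ∃ γ ∈ Γ, e = s * t * (γ : G × E).2 :=
  double_coset_space_finite_general Γ hcpt S hSo
end
end

section
/- Let G be a topological group, E a noncompact locally profinite group, and Γ a cocompact lattice in G × E whose projection pr_G : Γ → G is injective. Then for every compact open subgroup S of E the index [Γ_G : Γ_S] is infinite, where Γ_S := pr_G(Γ ∩ (G × S)). -/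
namespace Subgroup

theorem relIndex_map_map_of_injOn {G G' : Type*} [Group G] [Group G'] {f : G →* G'}
    {H K : Subgroup G} (hf : Set.InjOn f K) (hHK : H ≤ K) :
    (H.map f).relIndex (K.map f) = H.relIndex K := by
  have hinj : Function.Injective (f.comp K.subtype) := fun x y hxy => Subtype.ext (hf x.2 y.2 hxy)
  have hH : H.map f = (H.subgroupOf K).map (f.comp K.subtype) := by
    rw [← map_map, map_subgroupOf_eq_of_le hHK]
  have hK : K.map f = (⊤ : Subgroup K).map (f.comp K.subtype) := by
    rw [← map_map, ← MonoidHom.range_eq_map, range_subtype]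
  rw [hH, hK, relIndex_map_map_of_injective _ _ hinj, relIndex_top_right, relIndex]

theorem relIndex_map_fst_inf_top_prod {G E : Type*} [Group G] [Group E] {Γ : Subgroup (G × E)}
    (hΓ : Set.InjOn Prod.fst (Γ : Set (G × E))) (S : Subgroup E) :
    ((Γ ⊓ (⊤ : Subgroup G).prod S).map (MonoidHom.fst G E)).relIndex (Γ.map (MonoidHom.fst G E)) =
      S.relIndex (Γ.map (MonoidHom.snd G E)) := by
  rw [relIndex_map_map_of_injOn hΓ inf_le_left, inf_relIndex_left, top_prod, relIndex_comap]

theorem isCompact_topologicalClosure_of_relIndex_ne_zero {E : Type*} [Group E] [TopologicalSpace E]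
    [IsTopologicalGroup E] {S H : Subgroup E} (hS : IsCompact (S : Set E))
    (hSH : S.relIndex H ≠ 0) : IsCompact (H.topologicalClosure : Set E) := by
  have : (S.subgroupOf H).FiniteIndex := ⟨hSH⟩
  refine IsCompact.closure_of_subset
    (isCompact_iUnion fun q : H ⧸ S.subgroupOf H => hS.smul ((q.out : H) : E)) ?_
  intro h hh
  obtain ⟨s, hout⟩ := QuotientGroup.mk_out_eq_mul (S.subgroupOf H) ⟨h, hh⟩
  refine Set.mem_iUnion.2 ⟨(⟨h, hh⟩ : H), ((s : H) : E)⁻¹, S.inv_mem s.2, ?_⟩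
  simp [hout]

end Subgroup

theorem QuotientGroup.compactSpace_of_map_le {A B : Type*} [Group A] [TopologicalSpace A]
    [Group B] [TopologicalSpace B] {f : A →* B} (hfc : Continuous f)
    (hfs : Function.Surjective f) {Γ : Subgroup A} {H : Subgroup B} (hΓH : Γ.map f ≤ H)
    [CompactSpace (A ⧸ Γ)] : CompactSpace (B ⧸ H) := by
  have hrel : ∀ a b, QuotientGroup.leftRel Γ a b → QuotientGroup.leftRel H (f a) (f b) := by
    intro a b hab
    rw [QuotientGroup.leftRel_apply] at hab ⊢
    simpa using hΓH (Subgroup.mem_map_of_mem f hab)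
  refine Function.Surjective.compactSpace (f := Quotient.map' f hrel) ?_ ?_
  · exact hfc.quotient_map' hrel
  · refine QuotientGroup.mk_surjective.forall.2 fun b => ?_
    obtain ⟨a, rfl⟩ := hfs b
    exact ⟨(a : A ⧸ Γ), rfl⟩

theorem compactSpace_of_isCompact_of_compactSpace_quotient {E : Type*} [Group E]
    [TopologicalSpace E] [IsTopologicalGroup E] {K : Subgroup E} (hK : IsCompact (K : Set E))
    [CompactSpace (E ⧸ K)] : CompactSpace E := by
  have hfib (e : E) : IsCompact (((↑) : E → E ⧸ K) ⁻¹' {(e : E ⧸ K)}) := by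
    rw [← Set.image_singleton, QuotientGroup.preimage_image_mk_eq_mul]
    exact isCompact_singleton.mul hK
  have hproper : IsProperMap ((↑) : E → E ⧸ K) :=
    isProperMap_iff_isClosedMap_and_compact_fibers.2 ⟨QuotientGroup.continuous_mk,
      QuotientGroup.isClosedMap_coe hK, QuotientGroup.mk_surjective.forall.2 hfib⟩
  exact ⟨by simpa using hproper.isCompact_preimage isCompact_univ⟩

theorem index_of_GammaS_in_GammaG_infinite_general {G E : Type*}
    [Group G] [TopologicalSpace G]
    [Group E] [TopologicalSpace E] [IsTopologicalGroup E]
    (hnc : NoncompactSpace E)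
    (Γ : Subgroup (G × E))
    (hcpt : CompactSpace ((G × E) ⧸ Γ))
    (hinj : Set.InjOn Prod.fst (Γ : Set (G × E)))
    (S : Subgroup E) (hSc : IsCompact (S : Set E)) :
    Infinite
      ((Subgroup.map (MonoidHom.fst G E) Γ) ⧸
        ((Subgroup.map (MonoidHom.fst G E) (Γ ⊓ Subgroup.prod ⊤ S)).subgroupOf
          (Subgroup.map (MonoidHom.fst G E) Γ))) := by
  rw [← Subgroup.index_eq_zero_iff_infinite, ← Subgroup.relIndex,
    Subgroup.relIndex_map_fst_inf_top_prod hinj]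
  by_contra hfin
  set H := (Γ.map (MonoidHom.snd G E)).topologicalClosure
  have hHc : IsCompact (H : Set E) :=
    Subgroup.isCompact_topologicalClosure_of_relIndex_ne_zero hSc hfin
  have : CompactSpace (E ⧸ H) :=
    QuotientGroup.compactSpace_of_map_le continuous_snd Prod.snd_surjective
      (Subgroup.le_topologicalClosure _)
  exact hnc.noncompact_univ (compactSpace_of_isCompact_of_compactSpace_quotient hHc).isCompact_univ

/-- If `Γ` is a cocompact lattice in `G × E` with injective projection to `G`,
where `G` is a topological group and `E` a noncompact locally profinite group, then for every
compact open subgroup `S` of `E` the index `[Γ_G : Γ_S]` is infinite, where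
`Γ_S = pr_G(Γ ∩ (G × S))`. -/
theorem index_of_GammaS_in_GammaG_infinite {G E : Type*}
    [Group G] [TopologicalSpace G] [IsTopologicalGroup G]
    [Group E] [TopologicalSpace E] [IsTopologicalGroup E]
    (hE : IsLocallyProfinite E) (hnc : NoncompactSpace E)
    (Γ : Subgroup (G × E)) (hdisc : DiscreteTopology Γ)
    (hcpt : CompactSpace ((G × E) ⧸ Γ))
    (hinj : Set.InjOn Prod.fst (Γ : Set (G × E)))
    (S : Subgroup E) (hSc : IsCompact (S : Set E)) (hSo : IsOpen (S : Set E)) :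
    Infinite
      ((Subgroup.map (MonoidHom.fst G E) Γ) ⧸
        ((Subgroup.map (MonoidHom.fst G E) (Γ ⊓ Subgroup.prod ⊤ S)).subgroupOf
          (Subgroup.map (MonoidHom.fst G E) Γ))) :=
  index_of_GammaS_in_GammaG_infinite_general hnc Γ hcpt hinj S hSc
end

section
/- Let G be a topological group, E a noncompact locally profinite group, and Γ a cocompact lattice in G × E whose projection pr_G : Γ → G is injective. Then for every compact open subgroup S of E, Γ_G is contained in the commensurator of Γ_S in G: for every γ ∈ Γ_G the subgroup γ Γ_S γ⁻¹ ∩ Γ_S has finite index in both Γ_S and γ Γ_S γ⁻¹. -/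
noncomputable section

/-!
Write `γ = pr_G p` with `p = (γ, e) ∈ Γ`. Conjugation by `p` preserves `Γ` and carries `G × S` to
`G × eSe⁻¹`, so `γ Γ_S γ⁻¹ = Γ_{eSe⁻¹}`. Two compact open subgroups of `E` are commensurable,
since an open subgroup meets a compact one in a subgroup of finite index; and commensurability of
`S` and `T` passes to `Γ ∩ (G × S)` and `Γ ∩ (G × T)` and then to their images in `G`.
-/

namespace Subgroup

section Commensurable

variable {G : Type*} [Group G]

theorem Commensurable.finiteIndex_inf_subgroupOf {H K : Subgroup G}
    (h : Commensurable H K) :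
    ((H ⊓ K).subgroupOf K).FiniteIndex ∧ ((H ⊓ K).subgroupOf H).FiniteIndex := by
  rw [inf_subgroupOf_right, inf_subgroupOf_left]
  exact ⟨⟨h.1⟩, ⟨h.2⟩⟩

theorem relIndex_map_map_ne_zero {G' : Type*} [Group G'] (f : G →* G')
    {H K : Subgroup G} (h : H.relIndex K ≠ 0) : (H.map f).relIndex (K.map f) ≠ 0 := by
  rw [← relIndex_comap]
  exact fun h0 ↦ h (relIndex_eq_zero_of_le_left (le_comap_map f H) h0)

theorem Commensurable.map {G' : Type*} [Group G'] (f : G →* G') {H K : Subgroup G}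
    (h : Commensurable H K) : Commensurable (H.map f) (K.map f) :=
  ⟨relIndex_map_map_ne_zero f h.1, relIndex_map_map_ne_zero f h.2⟩

theorem Commensurable.comap {G' : Type*} [Group G'] (f : G' →* G) {H K : Subgroup G}
    (h : Commensurable H K) : Commensurable (H.comap f) (K.comap f) :=
  ⟨relIndex_comap_ne_zero f h.1, relIndex_comap_ne_zero f h.2⟩

theorem relIndex_inf_inf_left_ne_zero {H K : Subgroup G} (L : Subgroup G)
    (h : H.relIndex K ≠ 0) : (L ⊓ H).relIndex (L ⊓ K) ≠ 0 :=
  relIndex_inf_ne_zero (by rw [relIndex_eq_one.mpr inf_le_left]; exact one_ne_zero)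
    (mt (relIndex_eq_zero_of_le_right inf_le_right) h)

theorem Commensurable.inf_left {H K : Subgroup G} (L : Subgroup G)
    (h : Commensurable H K) : Commensurable (L ⊓ H) (L ⊓ K) :=
  ⟨relIndex_inf_inf_left_ne_zero L h.1, relIndex_inf_inf_left_ne_zero L h.2⟩

end Commensurable

section Topological

variable {E : Type*} [Group E] [TopologicalSpace E] [IsTopologicalGroup E]

theorem relIndex_ne_zero_of_isCompact_of_isOpen {S T : Subgroup E}
    (hS : IsCompact (S : Set E)) (hT : IsOpen (T : Set E)) : T.relIndex S ≠ 0 := by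
  have : CompactSpace S := isCompact_iff_compactSpace.mp hS
  have := quotient_finite_of_isOpen (T.subgroupOf S) (hT.preimage continuous_subtype_val)
  exact index_ne_zero_of_finite

theorem commensurable_of_isCompact_of_isOpen {S T : Subgroup E}
    (hSc : IsCompact (S : Set E)) (hSo : IsOpen (S : Set E))
    (hTc : IsCompact (T : Set E)) (hTo : IsOpen (T : Set E)) : Commensurable S T :=
  ⟨relIndex_ne_zero_of_isCompact_of_isOpen hTc hSo,
    relIndex_ne_zero_of_isCompact_of_isOpen hSc hTo⟩

theorem coe_map_conj (e : E) (S : Subgroup E) :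
    (S.map (MulAut.conj e).toMonoidHom : Set E) =
      (Homeomorph.mulLeft e).trans (Homeomorph.mulRight e⁻¹) '' S :=
  rfl

theorem isCompact_map_conj {S : Subgroup E} (hS : IsCompact (S : Set E)) (e : E) :
    IsCompact (S.map (MulAut.conj e).toMonoidHom : Set E) := by
  rw [coe_map_conj]
  exact hS.image (Homeomorph.continuous _)

theorem isOpen_map_conj {S : Subgroup E} (hS : IsOpen (S : Set E)) (e : E) :
    IsOpen (S.map (MulAut.conj e).toMonoidHom : Set E) := by
  rw [coe_map_conj]
  exact (Homeomorph.isOpenMap _) _ hS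

end Topological

section Slice

variable {G E : Type*} [Group G] [Group E]

/-- `Γ_S` in the notation of the paper. -/
def fstSlice (Γ : Subgroup (G × E)) (S : Subgroup E) : Subgroup G :=
  (Γ ⊓ (⊤ : Subgroup G).prod S).map (MonoidHom.fst G E)

theorem Commensurable.fstSlice (Γ : Subgroup (G × E)) {S T : Subgroup E}
    (h : Commensurable S T) : Commensurable (Γ.fstSlice S) (Γ.fstSlice T) := by
  rw [Subgroup.fstSlice, Subgroup.fstSlice, top_prod, top_prod]
  exact ((h.comap (MonoidHom.snd G E)).inf_left Γ).map (MonoidHom.fst G E)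

theorem map_conj_top_prod (p : G × E) (S : Subgroup E) :
    ((⊤ : Subgroup G).prod S).map (MulAut.conj p).toMonoidHom =
      (⊤ : Subgroup G).prod (S.map (MulAut.conj p.2).toMonoidHom) := by
  ext x
  simp only [mem_map, mem_prod, mem_top, true_and, MulEquiv.coe_toMonoidHom, MulAut.conj_apply]
  constructor
  · rintro ⟨y, hy, rfl⟩
    exact ⟨y.2, hy, rfl⟩
  · rintro ⟨s, hs, hsx⟩
    refine ⟨p⁻¹ * x * p, ?_, by group⟩
    simpa [← hsx, mul_assoc] using hs

theorem map_conj_fstSlice {Γ : Subgroup (G × E)} {p : G × E} (hp : p ∈ Γ)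
    (S : Subgroup E) :
    (Γ.fstSlice S).map (MulAut.conj p.1).toMonoidHom =
      Γ.fstSlice (S.map (MulAut.conj p.2).toMonoidHom) := by
  have hΓ : Γ.map (MulAut.conj p).toMonoidHom = Γ := conj_smul_eq_self_of_mem hp
  rw [fstSlice, fstSlice, map_map,
    show (MulAut.conj p.1).toMonoidHom.comp (MonoidHom.fst G E) =
      (MonoidHom.fst G E).comp (MulAut.conj p).toMonoidHom from rfl,
    ← map_map, map_inf _ _ _ (MulAut.conj p).injective, hΓ, map_conj_top_prod]

end Slice

end Subgroup

open Subgroup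

theorem GammaG_commensurates_GammaS_general {G E : Type*}
    [Group G] [Group E] [TopologicalSpace E] [IsTopologicalGroup E] (Γ : Subgroup (G × E))
    (S : Subgroup E) (hSc : IsCompact (S : Set E)) (hSo : IsOpen (S : Set E)) :
    ∀ g ∈ Subgroup.map (MonoidHom.fst G E) Γ,
      (((Subgroup.map (MulAut.conj g).toMonoidHom
            (Subgroup.map (MonoidHom.fst G E) (Γ ⊓ Subgroup.prod ⊤ S))) ⊓
          (Subgroup.map (MonoidHom.fst G E) (Γ ⊓ Subgroup.prod ⊤ S))).subgroupOf
            (Subgroup.map (MonoidHom.fst G E) (Γ ⊓ Subgroup.prod ⊤ S))).FiniteIndex ∧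
      (((Subgroup.map (MulAut.conj g).toMonoidHom
            (Subgroup.map (MonoidHom.fst G E) (Γ ⊓ Subgroup.prod ⊤ S))) ⊓
          (Subgroup.map (MonoidHom.fst G E) (Γ ⊓ Subgroup.prod ⊤ S))).subgroupOf
            (Subgroup.map (MulAut.conj g).toMonoidHom
              (Subgroup.map (MonoidHom.fst G E) (Γ ⊓ Subgroup.prod ⊤ S)))).FiniteIndex := by
  rintro g ⟨p, hp, rfl⟩
  have hcomm : Commensurable (Γ.fstSlice (S.map (MulAut.conj p.2).toMonoidHom)) (Γ.fstSlice S) :=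
    (commensurable_of_isCompact_of_isOpen (isCompact_map_conj hSc p.2) (isOpen_map_conj hSo p.2)
      hSc hSo).fstSlice Γ
  rw [← map_conj_fstSlice hp] at hcomm
  exact hcomm.finiteIndex_inf_subgroupOf

/-- If `Γ` is a cocompact lattice in `G × E` with injective projection to `G`,
where `G` is a topological group and `E` a noncompact locally profinite group, then for every
compact open subgroup `S` of `E`, `Γ_G` is contained in the commensurator of
`Γ_S = pr_G(Γ ∩ (G × S))` in `G`: for every `γ ∈ Γ_G` the subgroup `γ Γ_S γ⁻¹ ∩ Γ_S`
has finite index in both `Γ_S` and `γ Γ_S γ⁻¹`. -/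
theorem GammaG_commensurates_GammaS {G E : Type*}
    [Group G] [TopologicalSpace G] [IsTopologicalGroup G]
    [Group E] [TopologicalSpace E] [IsTopologicalGroup E]
    (hE : IsLocallyProfinite E) (hnc : NoncompactSpace E)
    (Γ : Subgroup (G × E)) (hdisc : DiscreteTopology Γ)
    (hcpt : CompactSpace ((G × E) ⧸ Γ))
    (hinj : Set.InjOn Prod.fst (Γ : Set (G × E)))
    (S : Subgroup E) (hSc : IsCompact (S : Set E)) (hSo : IsOpen (S : Set E)) :
    ∀ g ∈ Subgroup.map (MonoidHom.fst G E) Γ,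
      (((Subgroup.map (MulAut.conj g).toMonoidHom
            (Subgroup.map (MonoidHom.fst G E) (Γ ⊓ Subgroup.prod ⊤ S))) ⊓
          (Subgroup.map (MonoidHom.fst G E) (Γ ⊓ Subgroup.prod ⊤ S))).subgroupOf
            (Subgroup.map (MonoidHom.fst G E) (Γ ⊓ Subgroup.prod ⊤ S))).FiniteIndex ∧
      (((Subgroup.map (MulAut.conj g).toMonoidHom
            (Subgroup.map (MonoidHom.fst G E) (Γ ⊓ Subgroup.prod ⊤ S))) ⊓
          (Subgroup.map (MonoidHom.fst G E) (Γ ⊓ Subgroup.prod ⊤ S))).subgroupOf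
            (Subgroup.map (MulAut.conj g).toMonoidHom
              (Subgroup.map (MonoidHom.fst G E) (Γ ⊓ Subgroup.prod ⊤ S)))).FiniteIndex :=
  GammaG_commensurates_GammaS_general Γ S hSc hSo
end
end

section
/- Let E be a locally profinite group acting continuously on a Hausdorff topological space X. For compact open subgroups S' ⊆ S of E let ρ_{S,S'} : S'\X → S\X denote the natural projection between orbit spaces. Then the canonical map from X to the inverse limit of the projective system (S\X, ρ_{S,S'}), taken over all compact open subgroups S of E directed by reverse inclusion, is a homeomorphism. -/
noncomputable section

/-- The compact open subgroups of a topological group. -/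
def CompactOpenSubgroups (E : Type*) [Group E] [TopologicalSpace E] : Type _ :=
  {S : Subgroup E // IsCompact (S : Set E) ∧ IsOpen (S : Set E)}

/-- The natural projection `S'\X → S\X` between orbit spaces, for `S' ⊆ S`. -/
def orbitMap {E X : Type*} [Group E] [MulAction E X] {S S' : Subgroup E} (h : S' ≤ S) :
    Quotient (MulAction.orbitRel S' X) → Quotient (MulAction.orbitRel S X) :=
  Quotient.map (fun x => x) (fun x y hxy => by
    obtain ⟨s, hs⟩ := hxy
    exact ⟨⟨(s : E), h s.2⟩, hs⟩)

/-- The canonical map from `X` to the inverse limit of the orbit spaces `S\X`, taken over all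
compact open subgroups `S` of `E` directed by reverse inclusion. -/
def canonicalMapToInvLim (E X : Type*) [Group E] [TopologicalSpace E] [TopologicalSpace X]
    [MulAction E X] :
    X → {f : ∀ S : CompactOpenSubgroups E, Quotient (MulAction.orbitRel S.1 X) //
          ∀ (S S' : CompactOpenSubgroups E) (h : S'.1 ≤ S.1), orbitMap h (f S') = f S} :=
  fun x => ⟨fun S => Quotient.mk (MulAction.orbitRel S.1 X) x, fun _ _ _ => rfl⟩

open Set Filter Topology Pointwise MulAction

/-! Compact open subgroups form a neighbourhood basis of `1` (van Dantzig), so by continuity of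
the action every neighbourhood of `x` contains an `S`-saturated open neighbourhood of `x` for some
compact open `S`: the map to the limit is an embedding. A point of the limit picks in each `S\X` an
`S`-orbit, which is compact, hence closed; these orbits shrink along the directed system of
subgroups, so Cantor's intersection theorem gives a common point, which maps to it. -/

theorem exists_isCompact_isClopen_mem_subset {Y : Type*} [TopologicalSpace Y]
    [LocallyCompactSpace Y] [T2Space Y] [TotallyDisconnectedSpace Y] {y : Y} {U : Set Y}
    (hU : U ∈ 𝓝 y) : ∃ W : Set Y, IsCompact W ∧ IsClopen W ∧ y ∈ W ∧ W ⊆ U := by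
  obtain ⟨K, hK, hKy⟩ := exists_compact_mem_nhds y
  obtain ⟨W, hW, hyW, hWsub⟩ := loc_compact_Haus_tot_disc_of_zero_dim.mem_nhds_iff.1
    (inter_mem (interior_mem_nhds.2 hKy) hU)
  exact ⟨W, hK.of_isClosed_subset hW.1 (hWsub.trans (inter_subset_left.trans interior_subset)),
    hW, hyW, hWsub.trans inter_subset_right⟩

section VanDantzig

variable {G : Type*} [Group G]

theorem Subgroup.closure_subset_of_mul_subset {W T : Set G} (h1 : 1 ∈ W) (hT : T⁻¹ = T)
    (hWT : W * T ⊆ W) : (Subgroup.closure T : Set G) ⊆ W := by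
  suffices h : ∀ g ∈ Subgroup.closure T, ∀ w ∈ W, w * g ∈ W from
    fun g hg => by simpa using h g hg 1 h1
  intro g hg
  induction hg using Subgroup.closure_induction'' with
  | mem t ht => exact fun w hw => hWT (mul_mem_mul hw ht)
  | inv_mem t ht => exact fun w hw => hWT (mul_mem_mul hw (hT ▸ inv_mem_inv.2 ht))
  | one => simp
  | mul a b _ _ ha hb => exact fun w hw => mul_assoc w a b ▸ hb _ (ha w hw)

variable [TopologicalSpace G] [IsTopologicalGroup G]

/-- Van Dantzig's theorem. -/
theorem exists_isCompact_isOpen_subgroup_subset [LocallyCompactSpace G] [T2Space G]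
    [TotallyDisconnectedSpace G] {U : Set G} (hU : U ∈ 𝓝 1) :
    ∃ S : Subgroup G, IsCompact (S : Set G) ∧ IsOpen (S : Set G) ∧ (S : Set G) ⊆ U := by
  obtain ⟨W, hWc, hWo, h1W, hWU⟩ := exists_isCompact_isClopen_mem_subset hU
  obtain ⟨V, hV, hWV⟩ := compact_open_separated_mul_right hWc hWo.2 subset_rfl
  set T := V ∩ V⁻¹
  have hT : T ∈ 𝓝 1 := inter_mem hV (inv_mem_nhds_one G hV)
  have hSW : (Subgroup.closure T : Set G) ⊆ W :=
    Subgroup.closure_subset_of_mul_subset h1W (by simp [T, inter_comm])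
      ((mul_subset_mul_left inter_subset_left).trans hWV)
  have hSo : IsOpen (Subgroup.closure T : Set G) :=
    Subgroup.isOpen_of_mem_nhds _ (mem_of_superset hT Subgroup.subset_closure)
  exact ⟨_, hWc.of_isClosed_subset (Subgroup.isClosed_of_isOpen _ hSo) hSW, hSo, hSW.trans hWU⟩

end VanDantzig

namespace CompactOpenSubgroups

variable {E : Type*} [Group E] [TopologicalSpace E] [IsTopologicalGroup E]

instance [LocallyCompactSpace E] [T2Space E] [TotallyDisconnectedSpace E] :
    Nonempty (CompactOpenSubgroups E) :=
  let ⟨S, hSc, hSo, _⟩ := exists_isCompact_isOpen_subgroup_subset (G := E) univ_mem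
  ⟨⟨S, hSc, hSo⟩⟩

instance : Min (CompactOpenSubgroups E) where
  min S T := ⟨S.1 ⊓ T.1, by
    rw [Subgroup.coe_inf]
    exact ⟨S.2.1.inter_right (T.1.isClosed_of_isOpen T.2.2), S.2.2.inter T.2.2⟩⟩

theorem inf_le_left (S T : CompactOpenSubgroups E) : (S ⊓ T).1 ≤ S.1 := _root_.inf_le_left

theorem inf_le_right (S T : CompactOpenSubgroups E) : (S ⊓ T).1 ≤ T.1 := _root_.inf_le_right

end CompactOpenSubgroups

theorem Topology.isInducing_pi_of_forall_mem_nhds {ι X : Type*} {A : ι → Type*}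
    [TopologicalSpace X] [∀ i, TopologicalSpace (A i)] {f : ∀ i, X → A i}
    (hf : ∀ i, Continuous (f i))
    (h : ∀ x, ∀ U ∈ 𝓝 x, ∃ i, ∃ V ∈ 𝓝 (f i x), f i ⁻¹' V ⊆ U) :
    IsInducing fun x i => f i x := by
  refine isInducing_iff_nhds.2 fun x => le_antisymm
    ((continuous_pi hf).tendsto x).le_comap fun U hU => ?_
  obtain ⟨i, V, hV, hVU⟩ := h x U hU
  exact ⟨_, (continuous_apply i).continuousAt hV, hVU⟩

section Action

variable {E X : Type*} [Group E] [TopologicalSpace E] [IsTopologicalGroup E]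
  [LocallyCompactSpace E] [T2Space E] [TotallyDisconnectedSpace E]
  [TopologicalSpace X] [MulAction E X] [ContinuousSMul E X]

theorem exists_compactOpenSubgroup_preimage_orbit_subset (x : X) {U : Set X} (hU : U ∈ 𝓝 x) :
    ∃ S : CompactOpenSubgroups E, ∃ V ∈ 𝓝 (Quotient.mk (orbitRel S.1 X) x),
      Quotient.mk (orbitRel S.1 X) ⁻¹' V ⊆ U := by
  have hsmul : (fun p : E × X => p.1 • p.2) ⁻¹' U ∈ 𝓝 ((1 : E), x) :=
    continuous_smul.continuousAt.preimage_mem_nhds (by simpa using hU)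
  obtain ⟨N, W, hN, h1N, hW, hxW, hNW⟩ := mem_nhds_prod_iff'.1 hsmul
  obtain ⟨S, hSc, hSo, hSN⟩ := exists_isCompact_isOpen_subgroup_subset (hN.mem_nhds h1N)
  refine ⟨⟨S, hSc, hSo⟩, _, (isOpenQuotientMap_quotientMk.isOpenMap W hW).mem_nhds
    (mem_image_of_mem _ hxW), ?_⟩
  rintro y ⟨w, hw, hwy⟩
  obtain ⟨s, rfl⟩ := orbitRel_apply.1 (Quotient.exact hwy.symm)
  exact hNW (mk_mem_prod (hSN s.2) hw)

theorem isInducing_canonicalMapToInvLim : IsInducing (canonicalMapToInvLim E X) :=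
  IsInducing.subtypeVal.of_comp_iff.1 <|
    isInducing_pi_of_forall_mem_nhds (fun _ => continuous_quot_mk)
      exists_compactOpenSubgroup_preimage_orbit_subset

theorem canonicalMapToInvLim_surjective [T2Space X] :
    Function.Surjective (canonicalMapToInvLim E X) := by
  rintro ⟨f, hf⟩
  set C : CompactOpenSubgroups E → Set X := fun S => Quotient.mk (orbitRel S.1 X) ⁻¹' {f S}
  have hC_orbit : ∀ S, ∃ x, C S = orbit S.1 x := by
    intro S
    obtain ⟨x, hx⟩ := Quotient.exists_rep (f S)
    refine ⟨x, ext fun y => ?_⟩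
    simp [C, ← hx, Quotient.eq, orbitRel_apply]
  have hC_compact : ∀ S, IsCompact (C S) := by
    intro S
    obtain ⟨x, hx⟩ := hC_orbit S
    have := isCompact_iff_compactSpace.1 S.2.1
    exact hx ▸ isCompact_range (continuous_id.smul continuous_const)
  have hC_anti : ∀ S S' : CompactOpenSubgroups E, S'.1 ≤ S.1 → C S' ⊆ C S :=
    fun S S' h y hy => (congrArg (orbitMap h) hy).trans (hf S S' h)
  obtain ⟨x, hx⟩ := IsCompact.nonempty_iInter_of_directed_nonempty_isCompact_isClosed C
    (fun S S' => ⟨S ⊓ S', hC_anti _ _ (S.inf_le_left S'), hC_anti _ _ (S.inf_le_right S')⟩)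
    (fun S => (Quotient.exists_rep (f S)).imp fun _ => id)
    hC_compact (fun S => (hC_compact S).isClosed)
  exact ⟨x, Subtype.ext <| funext fun S => mem_iInter.1 hx S⟩

end Action

/-- Let `E` be a locally profinite group acting continuously on a Hausdorff
space `X`. Then the canonical map from `X` to the inverse limit of the orbit spaces `S\X`,
over all compact open subgroups `S` of `E` directed by reverse inclusion, is a homeomorphism. -/
theorem canonicalMapToInvLim_isHomeomorph {E X : Type*}
    [Group E] [TopologicalSpace E] [IsTopologicalGroup E]
    [TopologicalSpace X] [T2Space X] [MulAction E X] [ContinuousSMul E X]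
    (hE : IsLocallyProfinite E) :
    IsHomeomorph (canonicalMapToInvLim E X) := by
  obtain ⟨_, _, _⟩ := hE
  have hF : IsInducing (canonicalMapToInvLim E X) := isInducing_canonicalMapToInvLim
  exact isHomeomorph_iff_isEmbedding_surjective.2
    ⟨hF.isEmbedding, canonicalMapToInvLim_surjective⟩
end
end

section
/- Let G be a group and H a subgroup of finite index in G. If every element of G is conjugate to an element of H, i.e. G = ⋃_{g ∈ G} g H g⁻¹, then G = H. -/
/-!
Index the conjugates of `H` by the left cosets of `H`: there are `[G : H]` of them, each of index
`[G : H]`, so the sum of their inverse indices is exactly `1`. By B. H. Neumann's lemma on coset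
covers, a cover of `G` with this sum consists of pairwise disjoint pieces; since every conjugate
contains `1`, there can be only one coset, i.e. `H = G`.
-/

open scoped Pointwise

namespace Subgroup

variable {G : Type*} [Group G]

theorem subsingleton_of_iUnion_eq_univ_of_sum_inv_index_eq_one {ι : Type*} [Fintype ι]
    {K : ι → Subgroup G} (hfin : ∀ i, (K i).FiniteIndex)
    (hcover : ⋃ i, (K i : Set G) = Set.univ) (hsum : ∑ i, ((K i).index : ℚ)⁻¹ = 1) :
    Subsingleton ι := by
  classical
  have hcover' : ⋃ i ∈ Finset.univ, (1 : G) • (K i : Set G) = Set.univ := by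
    simpa only [one_smul, Finset.mem_univ, Set.iUnion_true] using hcover
  have hdisj := pairwiseDisjoint_leftCoset_cover_of_sum_inv_index_eq_one hcover' hsum
  refine ⟨fun i j => by_contra fun hij => ?_⟩
  have hmem : ∀ k, k ∈ Finset.univ.filter (fun k => (K k).FiniteIndex) := fun k => by
    simpa using hfin k
  have hone : ∀ k, (1 : G) ∈ (1 : G) • (K k : Set G) := fun k => by
    simpa only [one_smul, SetLike.mem_coe] using (K k).one_mem
  exact Set.disjoint_left.mp (hdisj (hmem i) (hmem j) hij) (hone i) (hone j)

theorem index_pointwise_smul {α : Type*} [Group α] [MulDistribMulAction α G] (a : α)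
    (H : Subgroup G) : (a • H).index = H.index := by
  rw [pointwise_smul_def]
  exact index_map_of_bijective (MulAction.bijective a) H

theorem conj_out_mk_smul_eq (H : Subgroup G) (x : G) :
    MulAut.conj (QuotientGroup.mk x : G ⧸ H).out • H = MulAut.conj x • H := by
  obtain ⟨h, hx⟩ := QuotientGroup.mk_out_eq_mul H x
  rw [hx, map_mul, mul_smul, conj_smul_eq_self_of_mem h.2]

theorem iUnion_conj_out_smul_eq_univ (H : Subgroup G)
    (hcover : ∀ g : G, ∃ x : G, ∃ h ∈ H, g = x * h * x⁻¹) :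
    ⋃ q : G ⧸ H, ((MulAut.conj q.out • H : Subgroup G) : Set G) = Set.univ := by
  refine Set.eq_univ_of_forall fun g => Set.mem_iUnion.mpr ?_
  obtain ⟨x, h, hh, rfl⟩ := hcover g
  refine ⟨QuotientGroup.mk x, ?_⟩
  rw [conj_out_mk_smul_eq]
  exact smul_mem_pointwise_smul h (MulAut.conj x) H hh

end Subgroup

open Subgroup in
/-- Let `G` be a group and `H` a subgroup of finite index in `G`. If every
element of `G` is conjugate to an element of `H`, i.e. `G = ⋃_{g ∈ G} g H g⁻¹`, then `G = H`. -/
theorem subgroup_eq_top_of_finiteIndex_of_conj_cover {G : Type*} [Group G]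
    (H : Subgroup G) (hfin : H.FiniteIndex)
    (hcover : ∀ g : G, ∃ x : G, ∃ h ∈ H, g = x * h * x⁻¹) :
    H = ⊤ := by
  have : Fintype (G ⧸ H) := Fintype.ofFinite _
  have hsum : ∑ q : G ⧸ H, ((MulAut.conj q.out • H).index : ℚ)⁻¹ = 1 := by
    have hne : (H.index : ℚ) ≠ 0 := Nat.cast_ne_zero.mpr hfin.index_ne_zero
    simp only [index_pointwise_smul, Finset.sum_const, Finset.card_univ, nsmul_eq_mul, ← Nat.card_eq_fintype_card]
    exact mul_inv_cancel₀ hne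
  exact QuotientGroup.subgroup_eq_top_of_subsingleton H <|
    subsingleton_of_iUnion_eq_univ_of_sum_inv_index_eq_one
      (fun q => ⟨by rw [index_pointwise_smul]; exact hfin.index_ne_zero⟩)
      (iUnion_conj_out_smul_eq_univ H hcover) hsum
end

section
/- Let K be a field of characteristic zero with algebraic closure K̄, let d ≥ 1, and let g ∈ GL_d(K). Then the characteristic polynomial of g is irreducible over K if and only if there exist λ ∈ K̄ and a nonzero vector v ∈ K̄^d with g v = λ v such that: (i) λ is a simple root of the characteristic polynomial of g (it has multiplicity one), and (ii) v does not lie on any K-rational hyperplane, i.e. for every nonzero a ∈ K^d one has Σ_i a_i v_i ≠ 0. -/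
/-!
If `χ = charpoly g` is irreducible, it is separable (characteristic zero), so every eigenvalue
`λ` is simple. Every nonzero `a ∈ K^d` is a cyclic vector for right multiplication by `g`,
because `K[X]/(χ)` is a field of dimension `d` acting on `K^d`. Since
`(a ⬝ g^k) · v = λ^k (a · v)`, a relation `a · v = 0` then spreads to `b · v = 0` for every
`b ∈ K^d`, which forces `v = 0`.

Conversely, if the coordinates of `v` are `K`-linearly independent, every `p ∈ K[X]` with
`p(λ) = 0` kills `g` (the vector `p(g) v = 0` has coordinates that are `K`-combinations of
the `vᵢ`). Hence the minimal polynomial of `g` is the irreducible minimal polynomial `f` of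
`λ`. Every root of `χ` is a root of `f`. So if `χ = f s`, either `f ∣ s` and `λ` is a
multiple root, or `s` is coprime to `f` and has no roots, i.e. `s = 1`.
-/

open Polynomial Matrix

theorem linearIndependent_iff_sum_algebraMap_mul_ne_zero {ι K L : Type*} [Fintype ι] [CommRing K]
    [CommRing L] [Algebra K L] {v : ι → L} :
    LinearIndependent K v ↔ ∀ a : ι → K, a ≠ 0 → ∑ i, algebraMap K L (a i) * v i ≠ 0 := by
  simp_rw [Fintype.linearIndependent_iff, ← Algebra.smul_def]
  refine ⟨fun h a ha hsum => ha (funext (h a hsum)), fun h a hsum i => ?_⟩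
  by_contra hai
  exact h a (fun ha => hai (congrFun ha i)) hsum

theorem Irreducible.rootMultiplicity_map_eq_one {K L : Type*} [Field K] [PerfectField K]
    [Field L] [Algebra K L] {p : K[X]} (hp : Irreducible p) {μ : L}
    (hμ : (p.map (algebraMap K L)).IsRoot μ) : rootMultiplicity μ (p.map (algebraMap K L)) = 1 :=
  le_antisymm
    (rootMultiplicity_le_one_of_separable (PerfectField.separable_of_irreducible hp).map μ)
    ((rootMultiplicity_pos (Polynomial.map_ne_zero hp.ne_zero)).2 hμ)

theorem Polynomial.Monic.irreducible_of_irreducible_dvd {K L : Type*} [Field K] [Field L]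
    [IsAlgClosed L] [Algebra K L] {p f : K[X]} (hp : p.Monic) (hf : Irreducible f) (hfm : f.Monic)
    (hfp : f ∣ p) (hroots : ∀ x : L, (p.map (algebraMap K L)).IsRoot x → aeval x f = 0) {μ : L}
    (hμ : rootMultiplicity μ (p.map (algebraMap K L)) = 1) : Irreducible p := by
  obtain ⟨s, rfl⟩ := hfp
  have hsm : s.Monic := hfm.of_mul_monic_left hp
  by_cases hfs : f ∣ s
  · obtain ⟨t, rfl⟩ := hfs
    have hroot : (f.map (algebraMap K L)).IsRoot μ := by
      rw [IsRoot, eval_map_algebraMap]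
      exact hroots μ ((rootMultiplicity_pos (hp.map _).ne_zero).1 (by omega))
    have hp0 := (hp.map (algebraMap K L)).ne_zero
    rw [Polynomial.map_mul, Polynomial.map_mul] at hp0 hμ
    rw [rootMultiplicity_mul hp0, rootMultiplicity_mul (right_ne_zero_of_mul hp0)] at hμ
    have := (rootMultiplicity_pos (left_ne_zero_of_mul hp0)).2 hroot
    omega
  · have hcop : IsCoprime f s := (hf.coprime_iff_not_dvd).2 hfs
    suffices hs : s.natDegree = 0 by rwa [hsm.natDegree_eq_zero.1 hs, mul_one]
    by_contra hs
    obtain ⟨x, hx⟩ := IsAlgClosed.exists_root (s.map (algebraMap K L))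
      (by rw [Polynomial.degree_map]; exact fun h => hs (natDegree_eq_of_degree_eq_some h))
    rw [IsRoot, eval_map_algebraMap] at hx
    have hpx : ((f * s).map (algebraMap K L)).IsRoot x := by
      rw [IsRoot, eval_map_algebraMap, map_mul, hx, mul_zero]
    exact (aeval_ne_zero_of_isCoprime hcop x).elim (· (hroots x hpx)) (· hx)

namespace Matrix

variable {n : Type*} [Fintype n]

theorem sum_vecMul_smul {K L : Type*} [CommRing K] [CommRing L] [Algebra K L]
    (P : Matrix n n K) (b : n → K) (v : n → L) :
    ∑ j, (b ᵥ* P) j • v j = ∑ i, b i • (P.map (algebraMap K L) *ᵥ v) i := by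
  simp only [vecMul, mulVec, dotProduct, map_apply, Algebra.smul_def, map_sum, map_mul,
    Finset.sum_mul, Finset.mul_sum, mul_assoc]
  exact Finset.sum_comm

variable [DecidableEq n]

theorem aeval_map {K L : Type*} [CommRing K] [CommRing L] [Algebra K L]
    (M : Matrix n n K) (p : K[X]) :
    aeval (M.map (algebraMap K L)) p = (aeval M p).map (algebraMap K L) :=
  aeval_algHom_apply (Algebra.ofId K L).mapMatrix M p

theorem aeval_mulVec_of_mulVec_eq_smul {K L : Type*} [CommRing K] [CommRing L] [Algebra K L]
    {A : Matrix n n L} {μ : L} {v : n → L} (hv : A *ᵥ v = μ • v) (p : K[X]) :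
    aeval A p *ᵥ v = aeval μ p • v := by
  have := Module.End.aeval_apply_of_mem_apply_eq_smul (f := toLinAlgEquiv' A)
    (p := p.map (algebraMap K L)) (by rw [toLinAlgEquiv'_apply, hv])
  rwa [aeval_algEquiv, AlgHom.comp_apply, AlgEquiv.coe_toAlgHom, toLinAlgEquiv'_apply,
    aeval_map_algebraMap, eval_map_algebraMap] at this

theorem exists_mulVec_eq_smul_of_isRoot_charpoly {L : Type*} [CommRing L] [IsDomain L]
    {A : Matrix n n L} {μ : L} (hμ : A.charpoly.IsRoot μ) : ∃ v ≠ 0, A *ᵥ v = μ • v := by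
  rw [← charpoly_toLin', ← Module.End.hasEigenvalue_iff_isRoot_charpoly] at hμ
  obtain ⟨v, hv, hv0⟩ := hμ.exists_hasEigenvector
  exact ⟨v, hv0, Module.End.mem_eigenspace_iff.1 hv⟩

theorem exists_vecMul_aeval_eq_of_irreducible_charpoly {K : Type*} [Field K] {M : Matrix n n K}
    (hM : Irreducible M.charpoly) {a : n → K} (ha : a ≠ 0) (b : n → K) :
    ∃ p : K[X], a ᵥ* aeval M p = b := by
  have := Fact.mk hM
  have := (AdjoinRoot.powerBasis hM.ne_zero).finite
  let ev : AdjoinRoot M.charpoly →ₐ[K] Matrix n n K :=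
    Ideal.Quotient.liftₐ _ (aeval M) fun q hq => by
      obtain ⟨c, rfl⟩ := Ideal.mem_span_singleton.1 hq
      rw [map_mul, aeval_self_charpoly, zero_mul]
  let Φ := vecMulBilin K K a ∘ₗ ev.toLinearMap
  have hinj : Function.Injective Φ := by
    rw [← LinearMap.ker_eq_bot, LinearMap.ker_eq_bot']
    intro x hx
    by_contra hx0
    refine ha ?_
    calc a = a ᵥ* ev (x * x⁻¹) := by rw [mul_inv_cancel₀ hx0, map_one, vecMul_one]
      _ = (a ᵥ* ev x) ᵥ* ev x⁻¹ := by rw [map_mul, vecMul_vecMul]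
      _ = 0 := by rw [show a ᵥ* ev x = 0 from hx, zero_vecMul]
  have hfin : Module.finrank K (AdjoinRoot M.charpoly) = Module.finrank K (n → K) := by
    rw [(AdjoinRoot.powerBasis hM.ne_zero).finrank, AdjoinRoot.powerBasis_dim,
      charpoly_natDegree_eq_dim, Module.finrank_fintype_fun_eq_card]
  obtain ⟨x, rfl⟩ := (LinearMap.injective_iff_surjective_of_finrank_eq_finrank hfin).1 hinj b
  obtain ⟨p, rfl⟩ := AdjoinRoot.mk_surjective x
  exact ⟨p, rfl⟩

section Eigenvector

variable {K L : Type*} [Field K] [Field L] [Algebra K L] {M : Matrix n n K} {μ : L} {v : n → L}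

theorem aeval_eq_zero_of_mulVec_eq_smul (hv0 : v ≠ 0) (hv : M.map (algebraMap K L) *ᵥ v = μ • v)
    {p : K[X]} (hp : aeval M p = 0) : aeval μ p = 0 := by
  have := aeval_mulVec_of_mulVec_eq_smul hv p
  rw [aeval_map, hp, Matrix.map_zero _ (map_zero _), zero_mulVec] at this
  exact (smul_eq_zero.1 this.symm).resolve_right hv0

theorem aeval_eq_zero_of_isRoot_charpoly_map {p : K[X]} (hp : aeval M p = 0)
    (hμ : (M.charpoly.map (algebraMap K L)).IsRoot μ) : aeval μ p = 0 := by
  rw [← charpoly_map] at hμ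
  obtain ⟨w, hw0, hw⟩ := exists_mulVec_eq_smul_of_isRoot_charpoly hμ
  exact aeval_eq_zero_of_mulVec_eq_smul hw0 hw hp

theorem linearIndependent_of_irreducible_charpoly (hM : Irreducible M.charpoly) (hv0 : v ≠ 0)
    (hv : M.map (algebraMap K L) *ᵥ v = μ • v) : LinearIndependent K v := by
  rw [Fintype.linearIndependent_iff]
  by_contra! ⟨a, hav, i, hai⟩
  have hvanish (b : n → K) : ∑ j, b j • v j = 0 := by
    obtain ⟨p, rfl⟩ :=
      exists_vecMul_aeval_eq_of_irreducible_charpoly hM (ne_of_apply_ne (· i) hai) b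
    simp only [sum_vecMul_smul, ← aeval_map, aeval_mulVec_of_mulVec_eq_smul hv,
      Pi.smul_apply, smul_comm _ (aeval μ p), ← Finset.smul_sum, hav, smul_zero]
  exact hv0 (funext fun j => by simpa [Pi.single_apply] using hvanish (Pi.single j 1))

theorem exists_eigenvector_linearIndependent_of_irreducible_charpoly [PerfectField K]
    [IsAlgClosed L] (hM : Irreducible M.charpoly) :
    ∃ (μ : L) (v : n → L), v ≠ 0 ∧ M.map (algebraMap K L) *ᵥ v = μ • v ∧
      rootMultiplicity μ (M.charpoly.map (algebraMap K L)) = 1 ∧ LinearIndependent K v := by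
  obtain ⟨μ, hμ⟩ := IsAlgClosed.exists_root (M.charpoly.map (algebraMap K L))
    (by rw [Polynomial.degree_map]; exact (degree_pos_of_irreducible hM).ne')
  obtain ⟨v, hv0, hv⟩ := exists_mulVec_eq_smul_of_isRoot_charpoly
    (A := M.map (algebraMap K L)) (by rwa [charpoly_map])
  exact ⟨μ, v, hv0, hv, hM.rootMultiplicity_map_eq_one hμ,
    linearIndependent_of_irreducible_charpoly hM hv0 hv⟩

theorem aeval_eq_zero_of_linearIndependent (hv : M.map (algebraMap K L) *ᵥ v = μ • v)
    (hli : LinearIndependent K v) {p : K[X]} (hp : aeval μ p = 0) : aeval M p = 0 := by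
  have hpv : (aeval M p).map (algebraMap K L) *ᵥ v = 0 := by
    rw [← aeval_map, aeval_mulVec_of_mulVec_eq_smul hv, hp, zero_smul]
  ext r j
  refine Fintype.linearIndependent_iff.1 hli (aeval M p r) ?_ j
  simpa [mulVec, dotProduct, Algebra.smul_def] using congrFun hpv r

theorem irreducible_minpoly_of_linearIndependent (hv0 : v ≠ 0)
    (hv : M.map (algebraMap K L) *ᵥ v = μ • v) (hli : LinearIndependent K v) :
    Irreducible (minpoly K M) := by
  obtain ⟨i, -⟩ := Function.ne_iff.1 hv0
  have : Nonempty n := ⟨i⟩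
  have hμ : IsIntegral K μ := ⟨minpoly K M, minpoly.monic M.isIntegral,
    aeval_eq_zero_of_mulVec_eq_smul hv0 hv (minpoly.aeval K M)⟩
  rw [← minpoly.eq_of_irreducible_of_monic (minpoly.irreducible hμ)
    (aeval_eq_zero_of_linearIndependent hv hli (minpoly.aeval K μ)) (minpoly.monic hμ)]
  exact minpoly.irreducible hμ

theorem irreducible_charpoly_of_linearIndependent [IsAlgClosed L] (hv0 : v ≠ 0)
    (hv : M.map (algebraMap K L) *ᵥ v = μ • v) (hli : LinearIndependent K v)
    (hμ : rootMultiplicity μ (M.charpoly.map (algebraMap K L)) = 1) : Irreducible M.charpoly :=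
  M.charpoly_monic.irreducible_of_irreducible_dvd
    (irreducible_minpoly_of_linearIndependent hv0 hv hli) (minpoly.monic M.isIntegral)
    M.minpoly_dvd_charpoly (fun _ => aeval_eq_zero_of_isRoot_charpoly_map (minpoly.aeval K M)) hμ

end Eigenvector

end Matrix

theorem charpoly_irreducible_iff_elliptic_general {K : Type*} [Field K] [CharZero K]
    (d : ℕ) (g : Matrix.GeneralLinearGroup (Fin d) K) :
    Irreducible (Matrix.charpoly (g : Matrix (Fin d) (Fin d) K)) ↔
      ∃ (lam : AlgebraicClosure K) (v : Fin d → AlgebraicClosure K),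
        v ≠ 0 ∧
        Matrix.mulVec
            ((g : Matrix (Fin d) (Fin d) K).map (algebraMap K (AlgebraicClosure K))) v =
          lam • v ∧
        Polynomial.rootMultiplicity lam
            ((Matrix.charpoly (g : Matrix (Fin d) (Fin d) K)).map
              (algebraMap K (AlgebraicClosure K))) = 1 ∧
        ∀ a : Fin d → K, a ≠ 0 →
          (∑ i, algebraMap K (AlgebraicClosure K) (a i) * v i) ≠ 0 := by
  simp_rw [← linearIndependent_iff_sum_algebraMap_mul_ne_zero]
  exact ⟨exists_eigenvector_linearIndependent_of_irreducible_charpoly,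
    fun ⟨_, _, hv0, hv, hμ, hli⟩ => irreducible_charpoly_of_linearIndependent hv0 hv hli hμ⟩

/-- Let `K` be a field of characteristic zero with algebraic closure `K̄`,
`d ≥ 1`, and `g ∈ GL_d(K)`. The characteristic polynomial of `g` is irreducible over `K` if
and only if there is an eigenvalue `λ ∈ K̄` and a nonzero eigenvector `v ∈ K̄^d` of `g` such
that `λ` is a simple root of the characteristic polynomial and `v` does not lie on any
`K`-rational hyperplane. -/
theorem charpoly_irreducible_iff_elliptic {K : Type*} [Field K] [CharZero K]
    (d : ℕ) (hd : 1 ≤ d) (g : Matrix.GeneralLinearGroup (Fin d) K) :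
    Irreducible (Matrix.charpoly (g : Matrix (Fin d) (Fin d) K)) ↔
      ∃ (lam : AlgebraicClosure K) (v : Fin d → AlgebraicClosure K),
        v ≠ 0 ∧
        Matrix.mulVec
            ((g : Matrix (Fin d) (Fin d) K).map (algebraMap K (AlgebraicClosure K))) v =
          lam • v ∧
        Polynomial.rootMultiplicity lam
            ((Matrix.charpoly (g : Matrix (Fin d) (Fin d) K)).map
              (algebraMap K (AlgebraicClosure K))) = 1 ∧
        ∀ a : Fin d → K, a ≠ 0 →
          (∑ i, algebraMap K (AlgebraicClosure K) (a i) * v i) ≠ 0 :=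
  charpoly_irreducible_iff_elliptic_general d g
end

section
/- Let A and B be locally compact second-countable Hausdorff topological groups equipped with right-invariant Radon measures μ_A on A and μ_B on B, let S be a compact open subgroup of A, and let Γ be a discrete subgroup of A × B whose projection pr_B : Γ → B is injective. Let Γ_A := pr_A(Γ), let (a_i)_{i∈I} be a complete set of representatives of the double cosets S\A/Γ_A, and for each i set Γ_i := pr_B(Γ ∩ (a_i⁻¹ S a_i × B)). Choose for each i a Borel fundamental domain U_i for the right translation action of Γ_i on B. Then for every Borel fundamental domain D for the right translation action of Γ on A × B one has (μ_A × μ_B)(D) = μ_A(S) · Σ_{i∈I} μ_B(U_i) (an equality in [0, +∞]). -/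
/-!
Put `F = ⋃ᵢ S aᵢ × Uᵢ`. Every `x ∈ A` is `s aᵢ γ_A` for some `(γ_A, γ_B) ∈ Γ`, and if moreover
`y γ_B⁻¹ ∈ Uᵢ δ` with `δ ∈ Γᵢ`, then `(x, y)` is a `Γ`-translate of a point of `S aᵢ × Uᵢ`; so the
translates of `F` cover `A × B` up to a null set. If the translates of `F` by `γ ≠ γ'` in `Γ` meet
above some `x ∈ A`, the double coset condition forces both pieces to come from the same `i`, and
then `γ_B γ'_B⁻¹` is a nontrivial element of `Γᵢ` (by injectivity of `pr_B`), so the overlap is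
null because `Uᵢ` is a fundamental domain for `Γᵢ`. So `F` is a fundamental domain for the
countable group `Γ`, whence `μ(D) = μ(F)`, and the disjoint sets `S aᵢ` all have measure `μ_A(S)`.
-/

open MeasureTheory

noncomputable section

def IsRightFundamentalDomain {Y : Type*} [Group Y] [MeasurableSpace Y]
    (Λ : Set Y) (μ : Measure Y) (D : Set Y) : Prop :=
  MeasurableSet D ∧
  μ (Set.univ \ ⋃ γ ∈ Λ, (fun x => x * γ) '' D) = 0 ∧
  Set.Pairwise Λ fun γ₁ γ₂ => μ (((fun x => x * γ₁) '' D) ∩ ((fun x => x * γ₂) '' D)) = 0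

open scoped Pointwise
open Set Function

section RightTranslation

variable {Y : Type*} [Group Y]

theorem op_smul_set_eq_image_mul_right (γ : Y) (X : Set Y) :
    MulOpposite.op γ • X = (· * γ) '' X := by
  simp [← image_smul]

variable [MeasurableSpace Y] {μ : Measure Y}

theorem measure_image_mul_right [μ.IsMulRightInvariant] (γ : Y) (X : Set Y) :
    μ ((· * γ) '' X) = μ X := by
  rw [← op_smul_set_eq_image_mul_right, measure_smul]

theorem measure_image_mul_right_inter_image_mul_right [μ.IsMulRightInvariant] (g h : Y)
    (X : Set Y) : μ ((· * g) '' X ∩ (· * h) '' X) = μ ((· * (g * h⁻¹)) '' X ∩ X) := by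
  have : (· * g) '' X = (· * h) '' ((· * (g * h⁻¹)) '' X) := by
    simp only [image_image, mul_assoc, inv_mul_cancel, mul_one]
  rw [this, ← image_inter (mul_left_injective h), measure_image_mul_right]

theorem MeasurableSet.image_mul_right [MeasurableMul Y] {X : Set Y} (hX : MeasurableSet X)
    (γ : Y) : MeasurableSet ((· * γ) '' X) :=
  op_smul_set_eq_image_mul_right γ X ▸ hX.const_smul _

theorem IsRightFundamentalDomain.isFundamentalDomain {Λ : Subgroup Y} {D : Set Y}
    (hD : IsRightFundamentalDomain Λ μ D) : IsFundamentalDomain Λ.op D μ where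
  nullMeasurableSet := hD.1.nullMeasurableSet
  ae_covers := by
    refine measure_mono_null (fun x hx => mem_sdiff_of_mem trivial ?_) hD.2.1
    simp only [mem_iUnion, mem_image, not_exists, not_and]
    rintro γ hγ d hd rfl
    exact hx ⟨⟨MulOpposite.op γ⁻¹, inv_mem hγ⟩, by simpa [Subgroup.smul_def] using hd⟩
  aedisjoint := by
    rintro ⟨g, hg⟩ ⟨h, hh⟩ hgh
    rw [onFun, AEDisjoint, Subgroup.mk_smul, Subgroup.mk_smul, ← g.op_unop, ← h.op_unop,
      op_smul_set_eq_image_mul_right, op_smul_set_eq_image_mul_right]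
    exact hD.2.2 (Subgroup.mem_op.1 hg) (Subgroup.mem_op.1 hh) (by simpa using hgh)

theorem IsRightFundamentalDomain.measure_eq [MeasurableMul Y] [μ.IsMulRightInvariant]
    {Λ : Subgroup Y} [Countable Λ] {D E : Set Y} (hD : IsRightFundamentalDomain Λ μ D)
    (hE : IsRightFundamentalDomain Λ μ E) : μ D = μ E :=
  hD.isFundamentalDomain.measure_eq hE.isFundamentalDomain

end RightTranslation

section CosetProdDomain

variable {A B I : Type*} [Group A] {S : Subgroup A} {a : I → A} {U : I → Set B}

def cosetProdDomain (S : Subgroup A) (a : I → A) (U : I → Set B) : Set (A × B) :=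
  ⋃ i, ((· * a i) '' (S : Set A)) ×ˢ U i

theorem measure_cosetProdDomain [MeasurableSpace A] [MeasurableSpace B] [MeasurableMul A]
    {μA : Measure A} {μB : Measure B} [Countable I] [SFinite μB] [μA.IsMulRightInvariant]
    (hS : MeasurableSet (S : Set A))
    (hdisj : Pairwise (Disjoint on fun i => (· * a i) '' (S : Set A)))
    (hU : ∀ i, MeasurableSet (U i)) :
    (μA.prod μB) (cosetProdDomain S a U) = μA S * ∑' i, μB (U i) := by
  rw [cosetProdDomain, measure_iUnion, ← ENNReal.tsum_mul_left]
  · simp only [Measure.prod_prod, measure_image_mul_right]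
  · exact hdisj.mono fun i j h => h.set_prod_left _ _
  · exact fun i => (hS.image_mul_right (a i)).prod (hU i)

end CosetProdDomain

section DoubleCosetDomain

variable {A B I : Type*} [Group A] [Group B] {S : Subgroup A} {Γ : Subgroup (A × B)}
  {a : I → A} {U : I → Set B}

/-- The group `Γᵢ` of the statement is `conjSlice Γ S (a i)`. -/
def conjSlice (Γ : Subgroup (A × B)) (S : Subgroup A) (c : A) : Set B :=
  {y | ∃ s ∈ S, (c⁻¹ * s * c, y) ∈ Γ}

theorem one_mem_conjSlice (c : A) : (1 : B) ∈ conjSlice Γ S c :=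
  ⟨1, S.one_mem, by rw [mul_one, inv_mul_cancel]; exact Γ.one_mem⟩

theorem snd_mul_inv_mem_conjSlice {c s t : A} (hs : s ∈ S) (ht : t ∈ S) {γ₁ γ₂ : A × B}
    (hγ₁ : γ₁ ∈ Γ) (hγ₂ : γ₂ ∈ Γ) (h : s * c * γ₁.1 = t * c * γ₂.1) :
    γ₁.2 * γ₂.2⁻¹ ∈ conjSlice Γ S c := by
  refine ⟨s⁻¹ * t, mul_mem (inv_mem hs) ht, ?_⟩
  convert mul_mem hγ₁ (inv_mem hγ₂) using 1
  refine Prod.ext ?_ rfl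
  rw [Prod.fst_mul, Prod.fst_inv, eq_mul_inv_iff_mul_eq, ← mul_right_inj (s * c), h]
  group

theorem eq_of_mul_mul_fst_eq
    (hrep' : ∀ i j : I,
      (∃ s ∈ S, ∃ g ∈ Prod.fst '' (Γ : Set (A × B)), a j = s * a i * g) → i = j)
    {i j : I} {s t : A} (hs : s ∈ S) (ht : t ∈ S) {γ₁ γ₂ : A × B} (hγ₁ : γ₁ ∈ Γ) (hγ₂ : γ₂ ∈ Γ)
    (h : s * a i * γ₁.1 = t * a j * γ₂.1) : i = j := by
  refine hrep' i j ⟨t⁻¹ * s, mul_mem (inv_mem ht) hs, (γ₁ * γ₂⁻¹).1,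
    mem_image_of_mem _ (mul_mem hγ₁ (inv_mem hγ₂)), ?_⟩
  rw [Prod.fst_mul, Prod.fst_inv, ← mul_assoc, mul_assoc t⁻¹ s, mul_assoc t⁻¹ (s * a i), h]
  group

theorem pairwise_disjoint_image_mul_right
    (hrep' : ∀ i j : I,
      (∃ s ∈ S, ∃ g ∈ Prod.fst '' (Γ : Set (A × B)), a j = s * a i * g) → i = j) :
    Pairwise (Disjoint on fun i => (· * a i) '' (S : Set A)) := by
  refine fun i j hij => disjoint_left.2 ?_
  rintro _ ⟨s, hs, rfl⟩ ⟨t, ht, hx⟩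
  exact hij (eq_of_mul_mul_fst_eq hrep' hs ht Γ.one_mem Γ.one_mem (by simpa using hx.symm))

theorem image_mul_right_cosetProdDomain (γ : A × B) :
    (· * γ) '' cosetProdDomain S a U =
      ⋃ i, ((· * γ.1) '' ((· * a i) '' (S : Set A))) ×ˢ ((· * γ.2) '' U i) := by
  simp only [cosetProdDomain, image_iUnion, prod_image_image_eq]
  rfl

theorem mk_mem_iUnion_image_mul_right_cosetProdDomain {i : I} {s : A} (hs : s ∈ S)
    {γ : A × B} (hγ : γ ∈ Γ) {δ : B} (hδ : δ ∈ conjSlice Γ S (a i)) {u : B} (hu : u ∈ U i) :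
    (s * a i * γ.1, u * δ * γ.2) ∈ ⋃ γ ∈ Γ, (· * γ) '' cosetProdDomain S a U := by
  obtain ⟨s', hs', hδΓ⟩ := hδ
  refine mem_biUnion (mul_mem hδΓ hγ) ⟨(s * s'⁻¹ * a i, u),
    mem_iUnion.2 ⟨i, ⟨s * s'⁻¹, mul_mem hs (inv_mem hs'), rfl⟩, hu⟩, ?_⟩
  ext
  · simp only [Prod.fst_mul]
    group
  · simp only [Prod.snd_mul, mul_assoc]

variable [MeasurableSpace A] [MeasurableSpace B] {μA : Measure A} {μB : Measure B}
  [SFinite μB] [μB.IsMulRightInvariant] [Countable I]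

theorem measure_compl_iUnion_image_mul_right_cosetProdDomain [Countable Γ]
    (hrep : ∀ x : A, ∃ i, ∃ s ∈ S, ∃ g ∈ Prod.fst '' (Γ : Set (A × B)), x = s * a i * g)
    (hU : ∀ i, IsRightFundamentalDomain (conjSlice Γ S (a i)) μB (U i)) :
    (μA.prod μB) (univ \ ⋃ γ ∈ Γ, (· * γ) '' cosetProdDomain S a U) = 0 := by
  set N : I → Set B := fun i => univ \ ⋃ δ ∈ conjSlice Γ S (a i), (· * δ) '' U i
  refine measure_mono_null (t := ⋃ i, ⋃ γ : Γ, univ ×ˢ ((· * (γ : A × B).2) '' N i))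
    ?_ (measure_iUnion_null fun i => measure_iUnion_null fun γ => ?_)
  · rintro ⟨x, y⟩ ⟨-, hxy⟩
    obtain ⟨i, s, hs, _, ⟨γ, hγ, rfl⟩, rfl⟩ := hrep x
    refine mem_iUnion₂.2 ⟨i, ⟨γ, hγ⟩, trivial, y * γ.2⁻¹, ⟨trivial, ?_⟩, by simp⟩
    simp only [mem_iUnion, mem_image, not_exists, not_and]
    rintro δ hδ u hu huδ
    refine hxy ?_
    simpa [huδ] using mk_mem_iUnion_image_mul_right_cosetProdDomain hs hγ hδ hu
  · rw [Measure.prod_prod, measure_image_mul_right, (hU i).2.1, mul_zero]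

theorem measure_image_mul_right_cosetProdDomain_inter_eq_zero
    (hrep' : ∀ i j : I,
      (∃ s ∈ S, ∃ g ∈ Prod.fst '' (Γ : Set (A × B)), a j = s * a i * g) → i = j)
    (hinj : InjOn Prod.snd (Γ : Set (A × B)))
    (hU : ∀ i, IsRightFundamentalDomain (conjSlice Γ S (a i)) μB (U i))
    {γ₁ γ₂ : A × B} (hγ₁ : γ₁ ∈ Γ) (hγ₂ : γ₂ ∈ Γ) (hne : γ₁ ≠ γ₂) :
    (μA.prod μB) ((· * γ₁) '' cosetProdDomain S a U ∩ (· * γ₂) '' cosetProdDomain S a U) = 0 := by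
  rw [image_mul_right_cosetProdDomain, image_mul_right_cosetProdDomain, iUnion_inter_iUnion]
  refine measure_iUnion_null fun i => measure_iUnion_null fun j => ?_
  rw [prod_inter_prod, Measure.prod_prod]
  rcases eq_empty_or_nonempty ((· * γ₁.1) '' ((· * a i) '' (S : Set A)) ∩
    (· * γ₂.1) '' ((· * a j) '' (S : Set A))) with hempty | ⟨_, hx₁, hx₂⟩
  · rw [hempty, measure_empty, zero_mul]
  obtain ⟨_, ⟨s, hs, rfl⟩, hx⟩ := hx₁
  obtain ⟨_, ⟨t, ht, rfl⟩, rfl⟩ := hx₂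
  obtain rfl := eq_of_mul_mul_fst_eq hrep' hs ht hγ₁ hγ₂ hx
  have hδ := snd_mul_inv_mem_conjSlice hs ht hγ₁ hγ₂ hx
  have hδne : γ₁.2 * γ₂.2⁻¹ ≠ 1 := mul_inv_eq_one.not.2 (hne ∘ hinj hγ₁ hγ₂)
  have hnull := (hU i).2.2 hδ (one_mem_conjSlice _) hδne
  simp only [mul_one, image_id'] at hnull
  rw [measure_image_mul_right_inter_image_mul_right (μ := μB), hnull, mul_zero]

theorem isRightFundamentalDomain_cosetProdDomain [MeasurableMul A] [Countable Γ]
    (hS : MeasurableSet (S : Set A))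
    (hrep : ∀ x : A, ∃ i, ∃ s ∈ S, ∃ g ∈ Prod.fst '' (Γ : Set (A × B)), x = s * a i * g)
    (hrep' : ∀ i j : I,
      (∃ s ∈ S, ∃ g ∈ Prod.fst '' (Γ : Set (A × B)), a j = s * a i * g) → i = j)
    (hinj : InjOn Prod.snd (Γ : Set (A × B)))
    (hU : ∀ i, IsRightFundamentalDomain (conjSlice Γ S (a i)) μB (U i)) :
    IsRightFundamentalDomain Γ (μA.prod μB) (cosetProdDomain S a U) :=
  ⟨.iUnion fun i => (hS.image_mul_right (a i)).prod (hU i).1,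
    measure_compl_iUnion_image_mul_right_cosetProdDomain hrep hU,
    fun _ hγ₁ _ hγ₂ hne =>
      measure_image_mul_right_cosetProdDomain_inter_eq_zero hrep' hinj hU hγ₁ hγ₂ hne⟩

end DoubleCosetDomain

theorem measure_fundamentalDomain_eq_general {A B : Type*}
    [Group A] [TopologicalSpace A] [IsTopologicalGroup A] [LocallyCompactSpace A]
    [SecondCountableTopology A] [MeasurableSpace A] [BorelSpace A]
    [Group B] [TopologicalSpace B] [IsTopologicalGroup B] [LocallyCompactSpace B]
    [SecondCountableTopology B] [MeasurableSpace B] [BorelSpace B]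
    (μA : Measure A) (μB : Measure B)
    [μA.IsMulRightInvariant] [μB.IsMulRightInvariant] [μA.Regular] [μB.Regular]
    (S : Subgroup A) (hSo : IsOpen (S : Set A))
    (Γ : Subgroup (A × B)) (hdisc : DiscreteTopology Γ)
    (hinj : Set.InjOn Prod.snd (Γ : Set (A × B)))
    (I : Type*) (a : I → A)
    (hrep : ∀ x : A, ∃ i, ∃ s ∈ S, ∃ g ∈ Prod.fst '' (Γ : Set (A × B)), x = s * a i * g)
    (hrep' : ∀ i j : I,
      (∃ s ∈ S, ∃ g ∈ Prod.fst '' (Γ : Set (A × B)), a j = s * a i * g) → i = j)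
    (U : I → Set B)
    (hU : ∀ i, IsRightFundamentalDomain
      {y : B | ∃ s ∈ S, ((a i)⁻¹ * s * a i, y) ∈ Γ} μB (U i))
    (D : Set (A × B))
    (hD : IsRightFundamentalDomain (Γ : Set (A × B)) (μA.prod μB) D) :
    (μA.prod μB) D = μA (S : Set A) * ∑' i, μB (U i) := by
  have : Countable Γ := TopologicalSpace.separableSpace_iff_countable.1 inferInstance
  have hdisj := pairwise_disjoint_image_mul_right hrep'
  have : Countable I := hdisj.countable_of_isOpen_disjoint
    (fun i => isOpenMap_mul_right (a i) _ hSo) fun i => ⟨a i, 1, S.one_mem, one_mul _⟩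
  rw [hD.measure_eq
      (isRightFundamentalDomain_cosetProdDomain hSo.measurableSet hrep hrep' hinj hU),
    measure_cosetProdDomain hSo.measurableSet hdisj fun i => (hU i).1]

/-- Let `A`, `B` be locally compact second-countable Hausdorff topological
groups, with right-invariant Radon measures `μ_A`, `μ_B`, let `S` be a compact open subgroup of
`A` and `Γ` a discrete subgroup of `A × B` with injective projection to `B`. Let `(a_i)` be a
complete set of representatives of `S\A/Γ_A`, let `Γᵢ = pr_B(Γ ∩ (aᵢ⁻¹ S aᵢ × B))` with Borel
fundamental domain `Uᵢ` for its right translation action on `B`. Then every Borel fundamental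
domain `D` of `Γ` acting by right translation on `A × B` satisfies
`(μ_A × μ_B)(D) = μ_A(S) · Σᵢ μ_B(Uᵢ)`. -/
theorem measure_fundamentalDomain_eq {A B : Type*}
    [Group A] [TopologicalSpace A] [IsTopologicalGroup A] [LocallyCompactSpace A]
    [SecondCountableTopology A] [T2Space A] [MeasurableSpace A] [BorelSpace A]
    [Group B] [TopologicalSpace B] [IsTopologicalGroup B] [LocallyCompactSpace B]
    [SecondCountableTopology B] [T2Space B] [MeasurableSpace B] [BorelSpace B]
    (μA : Measure A) (μB : Measure B)
    [μA.IsMulRightInvariant] [μB.IsMulRightInvariant] [μA.Regular] [μB.Regular]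
    (S : Subgroup A) (hSc : IsCompact (S : Set A)) (hSo : IsOpen (S : Set A))
    (Γ : Subgroup (A × B)) (hdisc : DiscreteTopology Γ)
    (hinj : Set.InjOn Prod.snd (Γ : Set (A × B)))
    (I : Type*) (a : I → A)
    (hrep : ∀ x : A, ∃ i, ∃ s ∈ S, ∃ g ∈ Prod.fst '' (Γ : Set (A × B)), x = s * a i * g)
    (hrep' : ∀ i j : I,
      (∃ s ∈ S, ∃ g ∈ Prod.fst '' (Γ : Set (A × B)), a j = s * a i * g) → i = j)
    (U : I → Set B)
    (hU : ∀ i, IsRightFundamentalDomain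
      {y : B | ∃ s ∈ S, ((a i)⁻¹ * s * a i, y) ∈ Γ} μB (U i))
    (D : Set (A × B))
    (hD : IsRightFundamentalDomain (Γ : Set (A × B)) (μA.prod μB) D) :
    (μA.prod μB) D = μA (S : Set A) * ∑' i, μB (U i) :=
  measure_fundamentalDomain_eq_general μA μB S hSo Γ hdisc hinj I a hrep hrep' U hU D hD
end
end
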